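/- (Lemma S-Lambda2-bot-4.) Let Γ* be a 𝒢-measurable ℝ^p-valued random variable with Γ*·S_ε ∈ H and Γ*·W·ε ∈ H. Then: (i) Γ*·W·ε is orthogonal to every element of Λ⁽¹⁾; (ii) Γ*·S_ε + Γ*·W·ε ∈ Λ⁽¹⁾, i.e., E[Γ*·(S_ε + W·ε) | ℋ] = 0 and E[Γ*·(S_ε + W·ε)·ε | ℋ] = 0 a.s. Consequently, the orthogonal projection of Γ*·S_ε onto the orthogonal complement of Λ⁽¹⁾ equals −Γ*·W·ε. (Taking Γ* a constant vector c gives part (b): the projection of c·S_ε onto Λ⁽¹⁾^⊥ is −c·W·ε.) -/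

import Mathlib

/-!
Everything is the pull-out property of conditional expectation, since `Γ*` and `W` are
`ℋ`-measurable: `E[(S_ε + Wε) Γ* | ℋ] = (E[S_ε | ℋ] + W E[ε | ℋ]) Γ* = 0` and
`E[ε (S_ε + Wε) Γ* | ℋ] = (E[S_ε ε | ℋ] + W E[ε² | ℋ]) Γ* = (-1 + 1) Γ* = 0`, while for `Γ ∈ Λ⁽¹⁾`
we get `E⟪Wε Γ*, Γ⟫ = E⟪W Γ*, E[ε Γ | ℋ]⟫ = 0`.
-/

open MeasureTheory
open scoped RealInnerProductSpace

namespace MeasureTheory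

variable {Ω E : Type*} {m mΩ : MeasurableSpace Ω} {μ : Measure Ω}
  [NormedAddCommGroup E] [InnerProductSpace ℝ E]

theorem MemLp.integrable_smul_of_two {f : Ω → ℝ} {g : Ω → E} (hf : MemLp f 2 μ)
    (hg : MemLp g 2 μ) : Integrable (f • g) μ :=
  memLp_one_iff_integrable.1 (hg.smul hf)

theorem MemLp.integrable_inner_of_two {f g : Ω → E} (hf : MemLp f 2 μ) (hg : MemLp g 2 μ) :
    Integrable (fun ω => ⟪f ω, g ω⟫) μ :=
  (L2.integrable_inner (hf.toLp f) (hg.toLp g)).congr <| by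
    filter_upwards [hf.coeFn_toLp, hg.coeFn_toLp] with ω h₁ h₂
    rw [h₁, h₂]

variable [CompleteSpace E]

theorem integral_eq_zero_of_condExp_eq_zero (hm : m ≤ mΩ) [SigmaFinite (μ.trim hm)]
    {f : Ω → E} (hf : μ[f|m] =ᵐ[μ] 0) : ∫ ω, f ω ∂μ = 0 := by
  rw [← integral_condExp hm, integral_congr_ae hf]
  simp

theorem integral_inner_eq_zero_of_condExp_eq_zero (hm : m ≤ mΩ) [SigmaFinite (μ.trim hm)]
    {Y g : Ω → E} (hY : StronglyMeasurable[m] Y) (hg : Integrable g μ)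
    (hYg : Integrable (fun ω => ⟪Y ω, g ω⟫) μ) (hg₀ : μ[g|m] =ᵐ[μ] 0) :
    ∫ ω, ⟪Y ω, g ω⟫ ∂μ = 0 := by
  have hpull : μ[fun ω => ⟪Y ω, g ω⟫|m] =ᵐ[μ] fun ω => ⟪Y ω, μ[g|m] ω⟫ :=
    condExp_bilin_of_stronglyMeasurable_left (innerSL ℝ) hY hYg hg
  refine integral_eq_zero_of_condExp_eq_zero hm ?_
  filter_upwards [hpull, hg₀] with ω hω h₀
  simp [hω, h₀]

theorem integral_inner_smul_eq_zero_of_condExp_smul_eq_zero (hm : m ≤ mΩ)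
    [SigmaFinite (μ.trim hm)] {f : Ω → ℝ} {Y h : Ω → E} (hY : StronglyMeasurable[m] Y)
    (hf : MemLp f 2 μ) (hfY : MemLp (f • Y) 2 μ) (hh : MemLp h 2 μ)
    (hfh : μ[f • h|m] =ᵐ[μ] 0) :
    ∫ ω, ⟪(f • Y) ω, h ω⟫ ∂μ = 0 := by
  have hmove : (fun ω => ⟪(f • Y) ω, h ω⟫) = fun ω => ⟪Y ω, (f • h) ω⟫ := by
    ext1 ω; simp only [Pi.smul_apply', real_inner_smul_left, real_inner_smul_right]
  rw [hmove]
  exact integral_inner_eq_zero_of_condExp_eq_zero hm hY (hf.integrable_smul_of_two hh)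
    (hmove ▸ hfY.integrable_inner_of_two hh) hfh

theorem condExp_smul_add_smul_eq_zero {f g : Ω → ℝ} {Y V : Ω → E}
    (hY : StronglyMeasurable[m] Y) (hV : StronglyMeasurable[m] V) (hf : Integrable f μ)
    (hg : Integrable g μ) (hfY : Integrable (f • Y) μ) (hgV : Integrable (g • V) μ)
    (hsum : ∀ᵐ ω ∂μ, μ[f|m] ω • Y ω + μ[g|m] ω • V ω = 0) :
    μ[f • Y + g • V|m] =ᵐ[μ] 0 := by
  filter_upwards [condExp_add hfY hgV m,
    condExp_smul_of_aestronglyMeasurable_right hf hfY hY.aestronglyMeasurable,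
    condExp_smul_of_aestronglyMeasurable_right hg hgV hV.aestronglyMeasurable, hsum]
    with ω h h₁ h₂ h₃
  simp only [h, Pi.add_apply, h₁, h₂, Pi.smul_apply', h₃, Pi.zero_apply]

end MeasureTheory

/-- Lemma S-Lambda2-bot-4: for `𝒢`-measurable `Γ*`,
(i) `Γ*·W·ε` is orthogonal to every element of `Λ⁽¹⁾`, and (ii) `Γ*·(S_ε + W·ε) ∈ Λ⁽¹⁾`;
consequently the projection of `Γ*·S_ε` onto `Λ⁽¹⁾^⊥` is `−Γ*·W·ε`. -/
theorem projection_of_score_onto_Lambda1_perp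
    {Ω : Type*} {mΩ : MeasurableSpace Ω} (P : Measure Ω) [IsProbabilityMeasure P]
    {p : ℕ} {mG mH : MeasurableSpace Ω} (hGH : mG ≤ mH) (hHF : mH ≤ mΩ)
    (ε : Ω → ℝ) (hε : MemLp ε 2 P) (hεH : P[ε|mH] =ᵐ[P] 0)
    (c₁ c₂ : ℝ) (hc₁ : 0 < c₁)
    (hvar : ∀ᵐ ω ∂P, c₁ ≤ (P[fun ω => ε ω ^ 2|mH]) ω ∧ (P[fun ω => ε ω ^ 2|mH]) ω ≤ c₂)
    (W : Ω → ℝ) (hW : W = fun ω => ((P[fun ω => ε ω ^ 2|mH]) ω)⁻¹)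
    -- the conditional score of the error density
    (Sε : Ω → ℝ) (hSε2 : MemLp Sε 2 P) (hSεH : P[Sε|mH] =ᵐ[P] 0)
    (hSεε : P[fun ω => Sε ω * ε ω|mH] =ᵐ[P] fun _ => (-1 : ℝ))
    -- the subspace Λ⁽¹⁾
    (Λ1 : Set (Ω → EuclideanSpace ℝ (Fin p)))
    (hΛ1 : Λ1 = {Γ | MemLp Γ 2 P ∧ (∫ ω, Γ ω ∂P) = 0 ∧
      P[Γ|mH] =ᵐ[P] 0 ∧ P[fun ω => ε ω • Γ ω|mH] =ᵐ[P] 0})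
    (Γs : Ω → EuclideanSpace ℝ (Fin p)) (hΓs : StronglyMeasurable[mG] Γs)
    (hΓsSε : MemLp (fun ω => Sε ω • Γs ω) 2 P)
    (hΓsWε : MemLp (fun ω => (W ω * ε ω) • Γs ω) 2 P) :
    -- (i) Γ*·W·ε ⟂ Λ⁽¹⁾
    (∀ h ∈ Λ1, ∫ ω, ⟪(W ω * ε ω) • Γs ω, h ω⟫ ∂P = 0) ∧
    -- (ii) Γ*·(S_ε + W·ε) ∈ Λ⁽¹⁾
    (fun ω => (Sε ω + W ω * ε ω) • Γs ω) ∈ Λ1 := by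
  subst hΛ1
  set V : Ω → EuclideanSpace ℝ (Fin p) := fun ω => W ω • Γs ω
  have hΓsH : StronglyMeasurable[mH] Γs := hΓs.mono hGH
  have hWH : StronglyMeasurable[mH] W := by
    rw [hW]; exact stronglyMeasurable_condExp.measurable.inv.stronglyMeasurable
  have hVH : StronglyMeasurable[mH] V := hWH.smul hΓsH
  have hεV : (fun ω => (W ω * ε ω) • Γs ω) = ε • V := by
    ext1 ω; simp only [V, Pi.smul_apply', smul_smul, mul_comm]
  have hF : (fun ω => (Sε ω + W ω * ε ω) • Γs ω) = Sε • Γs + ε • V := by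
    ext1 ω; simp only [V, Pi.add_apply, Pi.smul_apply', add_smul, smul_smul, mul_comm]
  have hεF : (fun ω => ε ω • (Sε • Γs + ε • V) ω)
      = (fun ω => Sε ω * ε ω) • Γs + (fun ω => ε ω ^ 2) • V := by
    ext1 ω; simp only [Pi.add_apply, Pi.smul_apply', smul_add, smul_smul, sq, mul_comm]
  rw [hεV] at hΓsWε
  refine ⟨fun h ⟨hh, _, _, hεh⟩ => ?_, ?_⟩
  · have horth := integral_inner_smul_eq_zero_of_condExp_smul_eq_zero hHF hVH hε hΓsWε hh hεh
    rwa [← hεV] at horth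
  have hF_cond : P[Sε • Γs + ε • V|mH] =ᵐ[P] 0 := by
    refine condExp_smul_add_smul_eq_zero hΓsH hVH (hSε2.integrable one_le_two)
      (hε.integrable one_le_two) (hΓsSε.integrable one_le_two) (hΓsWε.integrable one_le_two) ?_
    filter_upwards [hSεH, hεH] with ω h₁ h₂
    simp [h₁, h₂]
  have hεF_cond : P[(fun ω => Sε ω * ε ω) • Γs + (fun ω => ε ω ^ 2) • V|mH] =ᵐ[P] 0 := by
    refine condExp_smul_add_smul_eq_zero hΓsH hVH (hSε2.integrable_mul hε) hε.integrable_sq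
      ((hε.integrable_smul_of_two hΓsSε).congr (.of_forall fun ω => ?_))
      ((hε.integrable_smul_of_two hΓsWε).congr (.of_forall fun ω => ?_)) ?_
    · simp only [Pi.smul_apply', smul_smul, mul_comm]
    · simp only [Pi.smul_apply', smul_smul, sq]
    filter_upwards [hSεε, hvar] with ω h₁ h₂
    have hne : (P[fun ω => ε ω ^ 2|mH]) ω ≠ 0 := by linarith [h₂.1]
    simp [h₁, V, hW, smul_smul, hne]
  rw [hF]
  exact ⟨hΓsSε.add hΓsWε, integral_eq_zero_of_condExp_eq_zero hHF hF_cond, hF_cond,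
    hεF ▸ hεF_cond⟩
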